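/- Let C = ⟨F_1,...,F_t⟩ be a pure simplicial complex and let H be a finite set disjoint from the vertex set of C. Let D = ⟨F_1 ∪ H, ..., F_t ∪ H⟩. Then: (1) C is k-decomposable if and only if D is k-decomposable, and (2) a face F of C is a shedding face of C if and only if F is a shedding face of D. -/

import Mathlib

open Finset

variable {V : Type*} [DecidableEq V]

/-- A simplicial complex: a finite collection of finite faces closed under subsets. -/
def IsComplex (C : Finset (Finset V)) : Prop :=
  ∀ F ∈ C, ∀ G, G ⊆ F → G ∈ C

/-- `F` is a facet (maximal face) of `C`. -/
def IsFacet (C : Finset (Finset V)) (F : Finset V) : Prop :=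
  F ∈ C ∧ ∀ G ∈ C, F ⊆ G → F = G

/-- `C` is pure of dimension `d`: all facets have cardinality `d+1`. -/
def IsPure (C : Finset (Finset V)) (d : ℕ) : Prop :=
  ∀ F, IsFacet C F → F.card = d + 1

/-- The deletion of a face `F`: all faces not containing `F`. -/
def del (C : Finset (Finset V)) (F : Finset V) : Finset (Finset V) :=
  C.filter (fun G => ¬ F ⊆ G)

/-- The link of a face `F`. -/
def lk (C : Finset (Finset V)) (F : Finset V) : Finset (Finset V) :=
  C.filter (fun G => G ∩ F = ∅ ∧ G ∪ F ∈ C)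

/-- The simplicial complex generated by a collection of faces. -/
def gen (S : Finset (Finset V)) : Finset (Finset V) :=
  S.biUnion Finset.powerset

/-- `C` is a (full) simplex. -/
def IsSimplexCx (C : Finset (Finset V)) : Prop :=
  ∃ F : Finset V, C = F.powerset

/-- `F` is a shedding face of the pure `d`-dimensional complex `C`. -/
def Shedding (C : Finset (Finset V)) (d : ℕ) (F : Finset V) : Prop :=
  F ∈ C ∧ IsPure (del C F) d

/-- `k`-decomposability (Provan–Billera): a simplex, or there is a shedding face `F`
with `dim F ≤ k` whose deletion and link are again `k`-decomposable. -/
inductive Decomp : ℕ → Finset (Finset V) → Prop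
  | simplex (k : ℕ) (C : Finset (Finset V)) : IsSimplexCx C → Decomp k C
  | shed (k : ℕ) (C : Finset (Finset V)) (F : Finset V) (d : ℕ) :
      F ∈ C → F.Nonempty → F.card ≤ k + 1 → IsPure C d → IsPure (del C F) d →
      Decomp k (del C F) → Decomp k (lk C F) → Decomp k C

/-- The 1-dimensional skeleton of a complex, as a simple graph. -/
def skel (C : Finset (Finset V)) : SimpleGraph V where
  Adj x y := x ≠ y ∧ ({x, y} : Finset V) ∈ C
  symm := by
    refine ⟨?_⟩
    rintro x y ⟨hxy, hm⟩
    exact ⟨hxy.symm, by rwa [Finset.pair_comm]⟩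
  loopless := ⟨fun x h => h.1 rfl⟩

/-- A shelling of a pure `d`-dimensional complex: an ordering of the facets such that
each facet meets the union of the previous ones in a pure `(d-1)`-dimensional complex. -/
def IsShelling (C : Finset (Finset V)) (d : ℕ) (L : List (Finset V)) : Prop :=
  L.Nodup ∧ (∀ F, IsFacet C F ↔ F ∈ L) ∧
  ∀ i : ℕ, 1 ≤ i → ∀ h : i < L.length,
    IsPure (gen (L.take i).toFinset ∩ (L.get ⟨i, h⟩).powerset) (d - 1)

open scoped Classical in
/-- `full^d(G)`: the pure `d`-dimensional complex generated by all `(d+1)`-cliques of `G`. -/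
noncomputable def fullC [Fintype V] (d : ℕ) (G : SimpleGraph V) : Finset (Finset V) :=
  gen ((Finset.univ.powerset).filter fun s => G.IsClique (↑s : Set V) ∧ s.card = d + 1)

open scoped Classical in
/-- All `(d+1)`-cliques of `G` containing the set `e`. -/
noncomputable def cliquesWith [Fintype V] (d : ℕ) (G : SimpleGraph V) (e : Finset V) :
    Finset (Finset V) :=
  (Finset.univ.powerset).filter fun s => G.IsClique (↑s : Set V) ∧ s.card = d + 1 ∧ e ⊆ s

/-- `G^H`: join every vertex of `H` to every other vertex. -/
def coneGraph (G : SimpleGraph V) (H : Finset V) : SimpleGraph V where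
  Adj x y := x ≠ y ∧ (G.Adj x y ∨ x ∈ H ∨ y ∈ H)
  symm := by
    refine ⟨?_⟩
    rintro x y ⟨hxy, h⟩
    refine ⟨hxy.symm, ?_⟩
    rcases h with h | h | h
    · exact Or.inl (G.adj_symm h)
    · exact Or.inr (Or.inr h)
    · exact Or.inr (Or.inl h)
  loopless := ⟨fun x h => h.1 rfl⟩

/-- The graph `G` together with the extra edge `ab`. -/
def addEdge (G : SimpleGraph V) (a b : V) : SimpleGraph V :=
  G ⊔ SimpleGraph.fromEdgeSet {s(a, b)}

/-- `C` is fully coned with respect to `H`: every vertex of `H` is adjacent to every other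
vertex of `skel C`, and every `(d+1)`-clique of `skel C` is a facet of `C`. -/
def FullyConed (C : Finset (Finset V)) (d : ℕ) (H : Finset V) : Prop :=
  (∀ h ∈ H, ∀ v : V, ({v} : Finset V) ∈ C → v ≠ h → (skel C).Adj h v) ∧
  (∀ s : Finset V, (skel C).IsClique (↑s : Set V) → s.card = d + 1 → IsFacet C s)

/-! The padded complex is the join of `C` with the full simplex on `H`. Deletion and link of a
face of `C` commute with this join, and facets of the join are the facets of `C` enlarged by
`H`, so purity shifts dimension by `|H|`; hence shedding faces and whole decompositions of `C`
carry over to the join. Conversely `C` is the link of `H` in the join, and links of faces of a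
`k`-decomposable complex are `k`-decomposable (Provan–Billera). -/

@[simp] lemma mem_gen {S : Finset (Finset V)} {G : Finset V} :
    G ∈ gen S ↔ ∃ F ∈ S, G ⊆ F := by
  simp [gen]

@[simp] lemma mem_del {C : Finset (Finset V)} {F G : Finset V} :
    G ∈ del C F ↔ G ∈ C ∧ ¬ F ⊆ G :=
  mem_filter

@[simp] lemma mem_lk {C : Finset (Finset V)} {F G : Finset V} :
    G ∈ lk C F ↔ G ∈ C ∧ G ∩ F = ∅ ∧ G ∪ F ∈ C :=
  mem_filter

lemma isComplex_gen (S : Finset (Finset V)) : IsComplex (gen S) := by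
  rintro F hF G hGF
  obtain ⟨A, hA, hFA⟩ := mem_gen.1 hF
  exact mem_gen.2 ⟨A, hA, hGF.trans hFA⟩

section Complex

variable {C : Finset (Finset V)}

lemma isComplex_del (hC : IsComplex C) (F : Finset V) : IsComplex (del C F) := by
  rintro A hA B hBA
  rw [mem_del] at hA ⊢
  exact ⟨hC A hA.1 B hBA, fun hFB => hA.2 (hFB.trans hBA)⟩

lemma isComplex_lk (hC : IsComplex C) (F : Finset V) : IsComplex (lk C F) := by
  rintro A hA B hBA
  rw [mem_lk] at hA ⊢
  refine ⟨hC A hA.1 B hBA, ?_, hC _ hA.2.2 _ (union_subset_union_left hBA)⟩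
  exact subset_empty.1 (hA.2.1 ▸ inter_subset_inter_right hBA)

lemma sdiff_mem_lk (hC : IsComplex C) {F σ : Finset V} (h : F ∪ σ ∈ C) : F \ σ ∈ lk C σ :=
  mem_lk.2 ⟨hC _ h _ (sdiff_subset.trans subset_union_left), sdiff_inter_self _ _,
    by rwa [sdiff_union_self_eq_union]⟩

lemma lk_lk (hC : IsComplex C) {σ τ : Finset V} (hστ : σ ∩ τ = ∅) :
    lk (lk C σ) τ = lk C (σ ∪ τ) := by
  ext G
  simp only [mem_lk, ← disjoint_iff_inter_eq_empty, disjoint_union_right, union_assoc,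
    union_comm τ σ] at hστ ⊢
  constructor
  · rintro ⟨⟨hG, hGσ, -⟩, hGτ, -, -, hGστ⟩
    exact ⟨hG, ⟨hGσ, hGτ⟩, hGστ⟩
  · rintro ⟨hG, ⟨hGσ, hGτ⟩, hGστ⟩
    have hGσC : G ∪ σ ∈ C := hC _ hGστ _ (union_subset_union_right subset_union_left)
    have hGτC : G ∪ τ ∈ C := hC _ hGστ _ (union_subset_union_right subset_union_right)
    exact ⟨⟨hG, hGσ, hGσC⟩, hGτ, hGτC, disjoint_union_left.2 ⟨hGσ, hστ.symm⟩, hGστ⟩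

lemma lk_powerset {P F : Finset V} (hF : F ⊆ P) : lk P.powerset F = (P \ F).powerset := by
  ext G
  simp only [mem_lk, mem_powerset, subset_sdiff, disjoint_iff_inter_eq_empty]
  exact ⟨fun h => ⟨h.1, h.2.1⟩, fun h => ⟨h.1, h.2, union_subset h.1 hF⟩⟩

lemma del_lk_sdiff (σ F : Finset V) :
    del (lk C F) (σ \ F) = lk (del C σ) F := by
  have hsdiff : ∀ G, σ \ F ⊆ G ↔ σ ⊆ G ∪ F := fun G => by rw [union_comm]; exact sdiff_le_iff
  ext G
  simp only [mem_del, mem_lk, hsdiff]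
  constructor
  · rintro ⟨⟨hG, hGF, hGFC⟩, hσ⟩
    exact ⟨⟨hG, fun h => hσ (h.trans subset_union_left)⟩, hGF, hGFC, hσ⟩
  · rintro ⟨⟨hG, -⟩, hGF, hGFC, hσ⟩
    exact ⟨⟨hG, hGF, hGFC⟩, hσ⟩

lemma lk_del_of_union_notMem (hC : IsComplex C) {σ F : Finset V} (h : F ∪ σ ∉ C) :
    lk (del C σ) F = lk C F := by
  ext G
  simp only [mem_lk, mem_del]
  constructor
  · rintro ⟨⟨hG, -⟩, hGF, hGFC, -⟩
    exact ⟨hG, hGF, hGFC⟩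
  · rintro ⟨hG, hGF, hGFC⟩
    have hσ : ¬ σ ⊆ G ∪ F := fun hσ => h (hC _ hGFC _ (union_subset subset_union_right hσ))
    exact ⟨⟨hG, fun h' => hσ (h'.trans subset_union_left)⟩, hGF, hGFC, hσ⟩

lemma exists_isFacet_superset {G : Finset V} (hG : G ∈ C) : ∃ M, IsFacet C M ∧ G ⊆ M := by
  obtain ⟨M, hM, hmax⟩ :=
    (C.filter (G ⊆ ·)).exists_max_image card ⟨G, mem_filter.2 ⟨hG, Subset.rfl⟩⟩
  rw [mem_filter] at hM
  refine ⟨M, ⟨hM.1, fun A hA hMA => ?_⟩, hM.2⟩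
  exact eq_of_subset_of_card_le hMA (hmax A (mem_filter.2 ⟨hA, hM.2.trans hMA⟩))

lemma IsPure.card_le {d : ℕ} (hp : IsPure C d) {G : Finset V} (hG : G ∈ C) :
    G.card ≤ d + 1 := by
  obtain ⟨M, hM, hGM⟩ := exists_isFacet_superset hG
  exact hp M hM ▸ card_le_card hGM

lemma isPure_lk (hC : IsComplex C) {d : ℕ} (hp : IsPure C d) {F : Finset V}
    (hFd : F.card ≤ d) : IsPure (lk C F) (d - F.card) := by
  rintro G ⟨hG, hGmax⟩
  obtain ⟨-, hGF, hGFC⟩ := mem_lk.1 hG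
  obtain ⟨M, hM, hGFM⟩ := exists_isFacet_superset hGFC
  have hFM : F ⊆ M := subset_union_right.trans hGFM
  have hMF : M \ F ∈ lk C F := sdiff_mem_lk hC (by rw [union_eq_left.2 hFM]; exact hM.1)
  have hGM : G ⊆ M \ F :=
    subset_sdiff.2 ⟨subset_union_left.trans hGFM, disjoint_iff_inter_eq_empty.2 hGF⟩
  rw [hGmax _ hMF hGM, card_sdiff_of_subset hFM, hp M hM]
  omega

end Complex

lemma decomp_lk {k : ℕ} {C : Finset (Finset V)} (h : Decomp k C) (hC : IsComplex C)
    {F : Finset V} (hF : F ∈ C) : Decomp k (lk C F) := by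
  induction h generalizing F with
  | simplex C hs =>
    obtain ⟨P, rfl⟩ := hs
    exact Decomp.simplex _ _ ⟨P \ F, lk_powerset (mem_powerset.1 hF)⟩
  | shed C σ d hσ _ hk hp hpd _ _ ihd ihl =>
    have hlk_lk : lk (lk C σ) (F \ σ) = lk C (σ ∪ F) := by
      rw [lk_lk hC (inter_sdiff_self σ F), union_sdiff_self_eq_union]
    -- Either `lk C F` is a link in `lk C σ`, or `σ \ F` sheds it, or it is a link in `del C σ`.
    by_cases hσF : σ ⊆ F
    · rw [← union_eq_right.2 hσF, ← hlk_lk]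
      exact ihl (isComplex_lk hC σ) (sdiff_mem_lk hC (by rwa [union_eq_left.2 hσF]))
    have hFdel : F ∈ del C σ := mem_del.2 ⟨hF, hσF⟩
    by_cases hFσ : F ∪ σ ∈ C
    · have hFd : F.card ≤ d := by
        have : F.card < (F ∪ σ).card := card_lt_card (left_lt_sup.2 hσF)
        have := hp.card_le hFσ
        omega
      refine Decomp.shed k (lk C F) (σ \ F) (d - F.card)
        (sdiff_mem_lk hC (by rwa [union_comm])) (sdiff_nonempty.2 hσF)
        ((card_le_card sdiff_subset).trans hk) (isPure_lk hC hp hFd) ?_ ?_ ?_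
      · rw [del_lk_sdiff]
        exact isPure_lk (isComplex_del hC σ) hpd hFd
      · rw [del_lk_sdiff]
        exact ihd (isComplex_del hC σ) hFdel
      · rw [lk_lk hC (inter_sdiff_self F σ), union_sdiff_self_eq_union, union_comm, ← hlk_lk]
        exact ihl (isComplex_lk hC σ) (sdiff_mem_lk hC hFσ)
    · rw [← lk_del_of_union_notMem hC hFσ]
      exact ihd (isComplex_del hC σ) hFdel

def pad (C : Finset (Finset V)) (H : Finset V) : Finset (Finset V) :=
  (C ×ˢ H.powerset).image fun p => p.1 ∪ p.2

lemma pad_gen (S : Finset (Finset V)) (H : Finset V) :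
    pad (gen S) H = gen (S.image (· ∪ H)) := by
  ext G
  simp only [pad, mem_image, mem_product, Prod.exists]
  constructor
  · rintro ⟨A, B, ⟨hA, hB⟩, rfl⟩
    obtain ⟨F, hF, hAF⟩ := mem_gen.1 hA
    exact mem_gen.2 ⟨F ∪ H, mem_image_of_mem _ hF, union_subset_union hAF (mem_powerset.1 hB)⟩
  · intro hG
    obtain ⟨_, hF', hGF⟩ := mem_gen.1 hG
    obtain ⟨F, hF, rfl⟩ := mem_image.1 hF'
    refine ⟨G \ H, G ∩ H, ⟨?_, mem_powerset.2 inter_subset_right⟩, sdiff_union_inter G H⟩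
    exact mem_gen.2 ⟨F, hF, sdiff_le_iff'.2 hGF⟩

section Pad

variable {C : Finset (Finset V)} {H : Finset V}

lemma mem_pad (hd : ∀ A ∈ C, Disjoint A H) {G : Finset V} : G ∈ pad C H ↔ G \ H ∈ C := by
  constructor
  · intro hG
    simp only [pad, mem_image, mem_product, mem_powerset, Prod.exists] at hG
    obtain ⟨A, B, ⟨hA, hB⟩, rfl⟩ := hG
    rwa [union_sdiff_distrib, sdiff_eq_self_of_disjoint (hd A hA),
      sdiff_eq_empty_iff_subset.2 hB, union_empty]
  · intro hG
    exact mem_image.2 ⟨⟨G \ H, G ∩ H⟩, mem_product.2 ⟨hG, mem_powerset.2 inter_subset_right⟩,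
      sdiff_union_inter G H⟩

lemma union_mem_pad (hd : ∀ A ∈ C, Disjoint A H) {A : Finset V} (hA : A ∈ C) :
    A ∪ H ∈ pad C H := by
  rwa [mem_pad hd, union_sdiff_cancel_right (hd A hA)]

lemma isComplex_pad (hC : IsComplex C) (hd : ∀ A ∈ C, Disjoint A H) :
    IsComplex (pad C H) := by
  intro A hA B hBA
  rw [mem_pad hd] at hA ⊢
  exact hC _ hA _ (sdiff_subset_sdiff hBA Subset.rfl)

lemma isFacet_pad_iff (hd : ∀ A ∈ C, Disjoint A H) {G : Finset V} :
    IsFacet (pad C H) G ↔ H ⊆ G ∧ IsFacet C (G \ H) := by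
  constructor
  · rintro ⟨hG, hGmax⟩
    have hGH : G \ H ∈ C := (mem_pad hd).1 hG
    have hHG : H ⊆ G := union_eq_left.1
      (hGmax _ (by rwa [mem_pad hd, union_sdiff_right]) subset_union_left).symm
    refine ⟨hHG, hGH, fun A hA hGA => ?_⟩
    rw [hGmax _ (union_mem_pad hd hA) (sdiff_le_iff'.1 hGA), union_sdiff_cancel_right (hd A hA)]
  · rintro ⟨hHG, hGH, hGmax⟩
    refine ⟨(mem_pad hd).2 hGH, fun A hA hGA => Subset.antisymm hGA ?_⟩
    have hGA' : G \ H = A \ H := hGmax _ ((mem_pad hd).1 hA) (sdiff_subset_sdiff hGA Subset.rfl)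
    rw [← sdiff_union_of_subset hHG, hGA']
    exact sdiff_le_iff'.1 le_rfl

lemma isPure_pad_iff (hd : ∀ A ∈ C, Disjoint A H) {d : ℕ} :
    IsPure (pad C H) (d + H.card) ↔ IsPure C d := by
  constructor
  · intro hp A hA
    have hAH : IsFacet (pad C H) (A ∪ H) := (isFacet_pad_iff hd).2
      ⟨subset_union_right, by rwa [union_sdiff_cancel_right (hd A hA.1)]⟩
    have := hp _ hAH
    rw [card_union_of_disjoint (hd A hA.1)] at this
    omega
  · intro hp G hG
    obtain ⟨hHG, hGH⟩ := (isFacet_pad_iff hd).1 hG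
    rw [← sdiff_union_of_subset hHG, card_union_of_disjoint sdiff_disjoint, hp _ hGH]
    omega

lemma del_pad (hd : ∀ A ∈ C, Disjoint A H) {σ : Finset V} (hσH : Disjoint σ H) :
    del (pad C H) σ = pad (del C σ) H := by
  ext G
  rw [mem_del, mem_pad hd, mem_pad (fun A hA => hd A (mem_del.1 hA).1), mem_del,
    subset_sdiff, and_iff_left hσH]

lemma lk_pad (hd : ∀ A ∈ C, Disjoint A H) {σ : Finset V} (hσH : Disjoint σ H) :
    lk (pad C H) σ = pad (lk C σ) H := by
  ext G
  have hGσ : G ∩ σ = ∅ ↔ G \ H ∩ σ = ∅ := by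
    rw [← disjoint_iff_inter_eq_empty, ← disjoint_iff_inter_eq_empty]
    refine ⟨fun h => h.mono_left sdiff_subset, fun h => ?_⟩
    exact (disjoint_union_left.2 ⟨hσH.symm, h⟩).mono_left le_sup_sdiff
  rw [mem_lk, mem_pad hd, mem_pad (fun A hA => hd A (mem_lk.1 hA).1), mem_pad hd, mem_lk,
    union_sdiff_distrib, sdiff_eq_self_of_disjoint hσH, hGσ]

lemma lk_pad_self (hd : ∀ A ∈ C, Disjoint A H) : lk (pad C H) H = C := by
  ext G
  rw [mem_lk, mem_pad hd, mem_pad hd, union_sdiff_right, ← disjoint_iff_inter_eq_empty]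
  constructor
  · rintro ⟨hG, hGH, -⟩
    rwa [sdiff_eq_self_of_disjoint hGH] at hG
  · intro hG
    rw [sdiff_eq_self_of_disjoint (hd G hG)]
    exact ⟨hG, hd G hG, hG⟩

lemma decomp_pad {k : ℕ} (h : Decomp k C) (hd : ∀ A ∈ C, Disjoint A H) : Decomp k (pad C H) := by
  induction h with
  | simplex C hs =>
    obtain ⟨P, rfl⟩ := hs
    refine Decomp.simplex _ _ ⟨P ∪ H, ?_⟩
    ext G
    rw [mem_pad hd, mem_powerset, mem_powerset]
    exact sdiff_le_iff'
  | shed C σ d hσ hne hk hp hpd _ _ ihd ihl =>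
    have hσH : Disjoint σ H := hd σ hσ
    have hd_del : ∀ A ∈ del C σ, Disjoint A H := fun A hA => hd A (mem_del.1 hA).1
    refine Decomp.shed k (pad C H) σ (d + H.card)
      ((mem_pad hd).2 (by rwa [sdiff_eq_self_of_disjoint hσH])) hne hk
      ((isPure_pad_iff hd).2 hp) ?_ ?_ ?_
    · rw [del_pad hd hσH]
      exact (isPure_pad_iff hd_del).2 hpd
    · rw [del_pad hd hσH]
      exact ihd hd_del
    · rw [lk_pad hd hσH]
      exact ihl fun A hA => hd A (mem_lk.1 hA).1

lemma decomp_pad_iff {k : ℕ} (hC : IsComplex C) (hd : ∀ A ∈ C, Disjoint A H) :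
    Decomp k (pad C H) ↔ Decomp k C := by
  refine ⟨fun h => ?_, fun h => decomp_pad h hd⟩
  rcases C.eq_empty_or_nonempty with rfl | ⟨A, hA⟩
  · simpa [pad] using h
  · have h0 : ∅ ∈ C := hC A hA ∅ (empty_subset A)
    have hH : H ∈ pad C H := (mem_pad hd).2 (by rwa [sdiff_self])
    simpa only [lk_pad_self hd] using decomp_lk h (isComplex_pad hC hd) hH

lemma shedding_pad_iff (hd : ∀ A ∈ C, Disjoint A H) {F : Finset V} (hF : F ∈ C) {d : ℕ} :
    Shedding (pad C H) (d + H.card) F ↔ Shedding C d F := by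
  have hFH : Disjoint F H := hd F hF
  rw [Shedding, Shedding, del_pad hd hFH, isPure_pad_iff fun A hA => hd A (mem_del.1 hA).1,
    mem_pad hd, sdiff_eq_self_of_disjoint hFH]

end Pad

theorem padding_general (S : Finset (Finset V)) (H : Finset V) (d k : ℕ)
    (hdisj : ∀ F ∈ S, Disjoint F H) :
    (Decomp k (gen S) ↔ Decomp k (gen (S.image (· ∪ H)))) ∧
    (∀ F ∈ gen S, F.Nonempty →
      (Shedding (gen S) d F ↔ Shedding (gen (S.image (· ∪ H))) (d + H.card) F)) := by
  have hd : ∀ A ∈ gen S, Disjoint A H := fun A hA => by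
    obtain ⟨F, hF, hAF⟩ := mem_gen.1 hA
    exact (hdisj F hF).mono_left hAF
  rw [← pad_gen]
  exact ⟨(decomp_pad_iff (isComplex_gen S) hd).symm, fun F hF _ => (shedding_pad_iff hd hF).symm⟩

/-- Padding every facet with a disjoint set `H` preserves `k`-decomposability
and shedding faces. -/
theorem padding (S : Finset (Finset V)) (H : Finset V) (d k : ℕ)
    (hP : IsPure (gen S) d) (hdisj : ∀ F ∈ S, Disjoint F H) :
    (Decomp k (gen S) ↔ Decomp k (gen (S.image (· ∪ H)))) ∧
    (∀ F ∈ gen S, F.Nonempty →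
      (Shedding (gen S) d F ↔ Shedding (gen (S.image (· ∪ H))) (d + H.card) F)) :=
  padding_general S H d k hdisj
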